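/- Assume f : ℝ → ℝ is smooth with f(0) = 0, f′(t) < 0 for all t ≥ 0, and f(t) → −∞ as t → +∞. Let H = (H₁, H₂) : ℍ²×ℂ* → ℝ², where H₁(x,y,u,v) = (2/3)·f(y³(u²+v²)) and H₂(x,y,u,v) = 2(x/y)(1 − f(y³(u²+v²))). Then the image of H equals the open half-plane {(b₁, b₂) ∈ ℝ² : b₁ < 0}. -/

import Mathlib

/-- The Hamiltonian function of the circle action: `H₁ = (2/3)·f(y³(u²+v²))`. -/
noncomputable def H1 (f : ℝ → ℝ) (x y u v : ℝ) : ℝ :=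
  (2 / 3) * f (y ^ 3 * (u ^ 2 + v ^ 2))

/-- The Hamiltonian function of the diagonal `ℝ*`-action:
`H₂ = 2(x/y)(1 − f(y³(u²+v²)))`. -/
noncomputable def H2 (f : ℝ → ℝ) (x y u v : ℝ) : ℝ :=
  2 * (x / y) * (1 - f (y ^ 3 * (u ^ 2 + v ^ 2)))


/-- The image of `H = (H₁,H₂) : ℍ²×ℂ* → ℝ²` is the open half-plane `{b₁ < 0}`. -/
theorem stmt14 (f : ℝ → ℝ) (hf : ContDiff ℝ (⊤ : ℕ∞) f) (hf0 : f 0 = 0)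
    (hf' : ∀ t : ℝ, 0 ≤ t → deriv f t < 0)
    (hftop : Filter.Tendsto f Filter.atTop Filter.atBot) :
    (fun p : ℝ × ℝ × ℝ × ℝ =>
        (H1 f p.1 p.2.1 p.2.2.1 p.2.2.2, H2 f p.1 p.2.1 p.2.2.1 p.2.2.2)) ''
      {p : ℝ × ℝ × ℝ × ℝ | 0 < p.2.1 ∧ (p.2.2.1, p.2.2.2) ≠ (0, 0)} =
    {b : ℝ × ℝ | b.1 < 0} := by
  have hc : Continuous f := hf.continuous
  have hanti : StrictAntiOn f (Set.Ici 0) := by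
    apply strictAntiOn_of_deriv_neg (convex_Ici 0) hc.continuousOn
    intro t ht
    exact hf' t (le_of_lt (by simpa using ht))
  ext b
  simp only [Set.mem_image, Set.mem_setOf_eq]
  constructor
  · rintro ⟨⟨x, y, u, v⟩, ⟨hy, huv⟩, rfl⟩
    have huv' : 0 < u ^ 2 + v ^ 2 := by
      rcases (not_and_or.mp (by simpa [Prod.ext_iff] using huv) : u ≠ 0 ∨ v ≠ 0) with h | h
      · positivity
      · positivity
    have hs : 0 < y ^ 3 * (u ^ 2 + v ^ 2) := by positivity
    have hlt : f (y ^ 3 * (u ^ 2 + v ^ 2)) < f 0 :=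
      hanti (Set.mem_Ici.mpr (le_refl 0)) (Set.mem_Ici.mpr (le_of_lt hs)) hs
    rw [hf0] at hlt
    simp only [H1]
    nlinarith
  · intro hb
    set c := (3 / 2 : ℝ) * b.1 with hcdef
    have hcneg : c < 0 := by
      have : b.1 < 0 := hb
      nlinarith
    obtain ⟨T, hTc, hT0⟩ :=
      ((hftop.eventually (Filter.eventually_lt_atBot c)).and
        (Filter.eventually_ge_atTop (0 : ℝ))).exists
    have hsub := intermediate_value_Icc' hT0 hc.continuousOn
    have hcmem : c ∈ Set.Icc (f T) (f 0) := ⟨le_of_lt hTc, by rw [hf0]; exact le_of_lt hcneg⟩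
    obtain ⟨s, hsmem, hfs⟩ := hsub hcmem
    have hs0 : 0 < s := by
      rcases lt_or_eq_of_le hsmem.1 with h | h
      · exact h
      · exfalso; rw [← h, hf0] at hfs; exact absurd hfs.symm (ne_of_lt hcneg)
    have h1c : 0 < 1 - c := by linarith
    refine ⟨(b.2 / (2 * (1 - c)), 1, Real.sqrt s, 0), ⟨one_pos, ?_⟩, ?_⟩
    · simp [Prod.ext_iff, Real.sqrt_eq_zero', not_le, hs0]
    · have hsq : Real.sqrt s ^ 2 = s := Real.sq_sqrt hs0.le
      have harg : (1 : ℝ) ^ 3 * (Real.sqrt s ^ 2 + 0 ^ 2) = s := by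
        rw [hsq]; ring
      simp only [H1, H2, harg, hfs]
      have : 2 * (b.2 / (2 * (1 - c)) / 1) * (1 - c) = b.2 := by
        field_simp
      rw [this]
      have : (2 / 3 : ℝ) * c = b.1 := by rw [hcdef]; ring
      rw [this]
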